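/- arXiv:1207.5579 — 2 statements merged into one kernel-verified Lean document; each statement's English description precedes it below -/
import Mathlib

section
/- For each r ≥ 0 and d ≥ 1, define Θ^{(d)}_{r_1,...,r_d} = (r!/(r_1!···r_d!)) · (2r_1-1)!!···(2r_d-1)!! / (d(d+2)···(d+2r-2)) for nonnegative integers with r_1+···+r_d = r. Then Σ_{r_1+···+r_d=r} Θ^{(d)}_{r_1,...,r_d} = 1, i.e., these coefficients form a probability distribution on the set of such tuples. -/
/-- `dfact n = (2n-1)!!`, the odd double factorial, with `(-1)!! = 1`. -/
def dfact : ℕ → ℕ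
  | 0 => 1
  | n + 1 => (2 * n + 1) * dfact n

/-- `Θ^{(d)}_{r_1,…,r_d} = (r!/(r_1!⋯r_d!)) · (2r_1-1)!!⋯(2r_d-1)!! / (d(d+2)⋯(d+2r-2))`. -/
noncomputable def Theta (d r : ℕ) (p : Fin d → ℕ) : ℝ :=
  (Nat.multinomial Finset.univ p : ℝ) * (∏ i, (dfact (p i) : ℝ)) /
    ∏ j ∈ Finset.range r, ((d : ℝ) + 2 * j)

/-!
The numbers `(2n-1)!!/n!` are the Taylor coefficients of `A(x) = (1 - 2x)^{-1/2}`, so the sum of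
`r! ∏ (2rᵢ-1)!!/rᵢ!` over `r₁ + ⋯ + r_d = r` is `r!` times the `r`-th coefficient of
`A^d = (1 - 2x)^{-d/2}`, namely `d(d+2)⋯(d+2r-2)`. Formally, `A` is characterised by
`(1 - 2x) A' = A`, hence `(1 - 2x) (A^d)' = d A^d`, and this differential equation turns into the
recursion `(n+1) a_{n+1} = (d + 2n) a_n` for the coefficients of `A^d`.
-/

open PowerSeries Finset

namespace PowerSeries

theorem coeff_prod_fin {R : Type*} [CommSemiring R] {d : ℕ} (f : Fin d → R⟦X⟧) (n : ℕ) :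
    coeff n (∏ i, f i) = ∑ p ∈ Nat.antidiagonalTuple d n, ∏ i, coeff (p i) (f i) := by
  rw [coeff_prod, finsuppAntidiag, sum_map, ← piAntidiag_univ_fin_eq_antidiagonalTuple]
  exact sum_attach _ (fun p : Fin d → ℕ => ∏ i, coeff (p i) (f i))

variable {R : Type*} [CommRing R]

theorem coeff_X_mul_derivative (f : R⟦X⟧) (n : ℕ) :
    coeff n (X * d⁄dX R f) = n * coeff n f := by
  cases n with
  | zero => simp
  | succ n => rw [coeff_succ_X_mul, coeff_derivative, mul_comm]; push_cast; rfl

theorem coeff_succ_mul_of_derivative_eq {f : R⟦X⟧} {a c : R}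
    (hf : (1 - c • X) * d⁄dX R f = a • f) (n : ℕ) :
    coeff (n + 1) f * (n + 1) = (a + c * n) * coeff n f := by
  have h := congrArg (coeff n) hf
  rw [sub_mul, one_mul, smul_mul_assoc, map_sub, map_smul, map_smul, coeff_X_mul_derivative,
    coeff_derivative, smul_eq_mul, smul_eq_mul] at h
  linear_combination h

theorem factorial_mul_coeff_of_derivative_eq {f : R⟦X⟧} {a c : R}
    (hf : (1 - c • X) * d⁄dX R f = a • f) (n : ℕ) :
    n.factorial * coeff n f = (∏ j ∈ range n, (a + c * j)) * constantCoeff f := by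
  induction n with
  | zero => simp
  | succ n ih =>
    rw [Nat.factorial_succ, prod_range_succ, Nat.cast_mul, mul_assoc, mul_comm, mul_assoc,
      Nat.cast_succ, coeff_succ_mul_of_derivative_eq hf, mul_comm _ (coeff n f), ← mul_assoc, ih]
    ring

theorem derivative_pow_of_derivative_eq {f : R⟦X⟧} {c : R}
    (hf : (1 - c • X) * d⁄dX R f = f) (d : ℕ) :
    (1 - c • X) * d⁄dX R (f ^ d) = (d : R) • f ^ d := by
  cases d with
  | zero => simp
  | succ d =>
    rw [derivative_pow, Nat.add_sub_cancel, Nat.cast_smul_eq_nsmul, nsmul_eq_mul]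
    linear_combination ((d + 1 : ℕ) : R⟦X⟧) * f ^ d * hf

end PowerSeries

/-- The Taylor series of `(1 - 2x)^{-1/2}`. -/
noncomputable def dfactSeries : ℝ⟦X⟧ := mk fun n => (dfact n : ℝ) / n.factorial

theorem constantCoeff_dfactSeries : constantCoeff dfactSeries = 1 := by
  simp [dfactSeries, ← coeff_zero_eq_constantCoeff_apply, dfact]

theorem coeff_succ_dfactSeries_mul (n : ℕ) :
    coeff (n + 1) dfactSeries * (n + 1) = (2 * n + 1) * coeff n dfactSeries := by
  simp only [dfactSeries, coeff_mk, dfact, Nat.factorial_succ]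
  push_cast
  field_simp

theorem one_sub_two_X_mul_derivative_dfactSeries :
    (1 - (2 : ℝ) • X) * d⁄dX ℝ dfactSeries = dfactSeries := by
  ext n
  rw [sub_mul, one_mul, smul_mul_assoc, map_sub, map_smul, coeff_X_mul_derivative,
    coeff_derivative, coeff_succ_dfactSeries_mul, smul_eq_mul]
  ring

theorem factorial_mul_sum_prod_dfact_div_factorial (d r : ℕ) :
    r.factorial * ∑ p ∈ Nat.antidiagonalTuple d r, ∏ i, ((dfact (p i) : ℝ) / (p i).factorial) =
      ∏ j ∈ range r, ((d : ℝ) + 2 * j) := by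
  have h := factorial_mul_coeff_of_derivative_eq
    (derivative_pow_of_derivative_eq one_sub_two_X_mul_derivative_dfactSeries d) r
  rw [← Fin.prod_const, coeff_prod_fin, map_prod, constantCoeff_dfactSeries, prod_const_one,
    mul_one] at h
  simpa only [dfactSeries, coeff_mk] using h

theorem Theta_eq_factorial_mul_prod_div {d r : ℕ} {p : Fin d → ℕ}
    (hp : p ∈ Nat.antidiagonalTuple d r) :
    Theta d r p = r.factorial * (∏ i, ((dfact (p i) : ℝ) / (p i).factorial)) /
      ∏ j ∈ range r, ((d : ℝ) + 2 * j) := by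
  have hspec := Nat.multinomial_spec univ p
  rw [Nat.mem_antidiagonalTuple.mp hp] at hspec
  rw [Theta, ← hspec, prod_div_distrib]
  push_cast
  field_simp

/-- The coefficients `Θ^{(d)}_{r_1,…,r_d}` form a probability distribution on the set of tuples
of nonnegative integers with `r_1 + ⋯ + r_d = r`: they sum to `1`. -/
theorem Theta_sum_eq_one (d r : ℕ) (hd : 1 ≤ d) :
    ∑ p ∈ Finset.Nat.antidiagonalTuple d r, Theta d r p = 1 := by
  have hpos : (0 : ℝ) < ∏ j ∈ range r, ((d : ℝ) + 2 * j) :=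
    prod_pos fun j _ => by positivity
  rw [sum_congr rfl fun p hp => Theta_eq_factorial_mul_prod_div hp, ← sum_div, ← mul_sum,
    factorial_mul_sum_prod_dfact_div_factorial, div_self hpos.ne']
end

section
/- Let g ∈ SL(d,ℝ) have singular values 0 < λ_1 ≤ ··· ≤ λ_d, let k be an orthogonal matrix with gᵀg = kᵀ diag(λ_1²,...,λ_d²) k, and let ν be a Borel probability measure on 𝕊^{d-1}. If λ_* > λ_d/√2, then ∫ log‖gx‖ dν(x) = log λ_* − Σ_{r=1}^∞ (1/(2r)) Σ_{r_1+···+r_d=r} Θ_{r_1,...,r_d}(k,ν) (1−λ_1²/λ_*²)^{r_1}···(1−λ_d²/λ_*²)^{r_d}, where Θ_{r_1,...,r_d}(k,ν) = (r!/(r_1!···r_d!)) ∫ (kx)_1^{2r_1}···(kx)_d^{2r_d} dν(x), and the series converges absolutely. -/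
open MeasureTheory Matrix Finset

/-!
With `y = k x` a unit vector, `‖g x‖² = ∑ λᵢ² yᵢ² = λ_*² (1 - u x)` where
`u x = ∑ (1 - λᵢ²/λ_*²) yᵢ²` is a convex combination of numbers of modulus `< 1`; hence
`|u| ≤ M < 1` uniformly on the sphere. So `log ‖g x‖ = log λ_* - ½ ∑ u^r / r`, the series is
dominated by `∑ M^r` and may be integrated termwise, and the multinomial theorem turns
`∫ u^r dν` into the moments `Θ`. The same argument with the coefficients `|1 - λᵢ²/λ_*²|`
gives absolute convergence.
-/

theorem Finite.exists_forall_le_lt {ι α : Type*} [Finite ι] [LinearOrder α] [NoMinOrder α]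
    {f : ι → α} {b : α} (h : ∀ i, f i < b) : ∃ m < b, ∀ i, f i ≤ m := by
  rcases isEmpty_or_nonempty ι with hι | hι
  · obtain ⟨m, hm⟩ := exists_lt b
    exact ⟨m, hm, isEmptyElim⟩
  · obtain ⟨j, hj⟩ := Finite.exists_max f
    exact ⟨f j, h j, hj⟩

theorem abs_sum_mul_le_of_sum_eq_one {ι : Type*} {s : Finset ι} {c w : ι → ℝ} {M : ℝ}
    (hc : ∀ i ∈ s, |c i| ≤ M) (hw : ∀ i ∈ s, 0 ≤ w i) (hw1 : ∑ i ∈ s, w i = 1) :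
    |∑ i ∈ s, c i * w i| ≤ M :=
  calc |∑ i ∈ s, c i * w i| ≤ ∑ i ∈ s, |c i| * w i := by
        refine (abs_sum_le_sum_abs _ _).trans_eq (sum_congr rfl fun i hi => ?_)
        rw [abs_mul, abs_of_nonneg (hw i hi)]
    _ ≤ ∑ i ∈ s, M * w i := sum_le_sum fun i hi => mul_le_mul_of_nonneg_right (hc i hi) (hw i hi)
    _ = M := by rw [← mul_sum, hw1, mul_one]

theorem abs_one_sub_sq_div_sq_lt_one {l s : ℝ} (hl : 0 < l) (hls : l < √2 * s) :
    |1 - l ^ 2 / s ^ 2| < 1 := by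
  have hs : 0 < s := pos_of_mul_pos_right (hl.trans hls) (Real.sqrt_nonneg 2)
  have hl2 : l ^ 2 < 2 * s ^ 2 := by
    calc l ^ 2 < (√2 * s) ^ 2 := pow_lt_pow_left₀ hls hl.le two_ne_zero
      _ = 2 * s ^ 2 := by rw [mul_pow, Real.sq_sqrt zero_le_two]
  have h0 : 0 < l ^ 2 / s ^ 2 := by positivity
  have h2 : l ^ 2 / s ^ 2 < 2 := by rwa [div_lt_iff₀ (by positivity)]
  rw [abs_lt]
  constructor <;> linarith

theorem abs_log_one_sub_le {u M : ℝ} (hM : M < 1) (hu : |u| ≤ M) :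
    |Real.log (1 - u)| ≤ -Real.log (1 - M) := by
  rw [abs_le] at hu
  have hpos : 0 < 1 - M := by linarith
  have hlogM : Real.log (1 - M) ≤ -M := by linarith [Real.log_le_sub_one_of_pos hpos]
  rw [abs_le]
  constructor
  · linarith [Real.log_le_log hpos (by linarith : 1 - M ≤ 1 - u)]
  · linarith [Real.log_le_sub_one_of_pos (by linarith : 0 < 1 - u)]

theorem sum_mul_sq_pow_eq {d : ℕ} (b y : Fin d → ℝ) (n : ℕ) :
    (∑ i, b i * y i ^ 2) ^ n = ∑ p ∈ Nat.antidiagonalTuple d n,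
      (Nat.multinomial univ p : ℝ) * ((∏ i, b i ^ p i) * ∏ i, y i ^ (2 * p i)) := by
  have hanti : Nat.antidiagonalTuple d n = univ.piAntidiag n := by
    ext p
    simp [Nat.mem_antidiagonalTuple, mem_piAntidiag]
  rw [hanti, sum_pow_eq_sum_piAntidiag]
  refine sum_congr rfl fun p _ => ?_
  rw [← prod_mul_distrib]
  congr 1
  exact prod_congr rfl fun i _ => by rw [mul_pow, ← pow_mul]

theorem exists_lt_one_abs_sum_mul_sq_le {α : Type*} {d : ℕ} {Y : α → Fin d → ℝ}
    (hY1 : ∀ x, ∑ i, Y x i ^ 2 = 1) {c : Fin d → ℝ}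
    (hc : ∀ i, |c i| < 1) : ∃ M < 1, ∀ x, |∑ i, c i * Y x i ^ 2| ≤ M := by
  obtain ⟨M, hM, hcM⟩ := Finite.exists_forall_le_lt hc
  exact ⟨M, hM, fun x =>
    abs_sum_mul_le_of_sum_eq_one (fun i _ => hcM i) (fun i _ => sq_nonneg _) (hY1 x)⟩

theorem EuclideanSpace.real_norm_sq_eq_dotProduct {n : Type*} [Fintype n] (x : EuclideanSpace ℝ n) :
    ‖x‖ ^ 2 = x.ofLp ⬝ᵥ x.ofLp := by
  rw [EuclideanSpace.real_norm_sq_eq]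
  simp only [dotProduct, sq]

theorem Matrix.dotProduct_mulVec_self {n : Type*} [Fintype n] (A : Matrix n n ℝ) (v : n → ℝ) :
    (A *ᵥ v) ⬝ᵥ (A *ᵥ v) = v ⬝ᵥ ((Aᵀ * A) *ᵥ v) := by
  rw [← mulVec_mulVec, dotProduct_mulVec v Aᵀ, vecMul_transpose]

theorem Matrix.dotProduct_mulVec_self_of_transpose_mul_eq {n : Type*} [Fintype n] [DecidableEq n]
    {g k : Matrix n n ℝ} {w : n → ℝ} (h : gᵀ * g = kᵀ * diagonal w * k) (v : n → ℝ) :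
    (g *ᵥ v) ⬝ᵥ (g *ᵥ v) = ∑ i, w i * (k *ᵥ v) i ^ 2 := by
  rw [dotProduct_mulVec_self, h, ← mulVec_mulVec, ← mulVec_mulVec, dotProduct_mulVec v kᵀ,
    vecMul_transpose]
  simp only [dotProduct, mulVec_diagonal]
  exact sum_congr rfl fun i _ => by ring

theorem Matrix.sum_sq_mulVec_of_mem_orthogonalGroup {n : Type*} [Fintype n] [DecidableEq n]
    {k : Matrix n n ℝ} (hk : k ∈ orthogonalGroup n ℝ) (x : EuclideanSpace ℝ n) :
    ∑ i, (k *ᵥ x.ofLp) i ^ 2 = ‖x‖ ^ 2 := by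
  have hkk : kᵀ * k = 1 := by
    simpa [star_eq_conjTranspose] using (mem_orthogonalGroup_iff' _ _).1 hk
  calc ∑ i, (k *ᵥ x.ofLp) i ^ 2 = (k *ᵥ x.ofLp) ⬝ᵥ (k *ᵥ x.ofLp) := by
        simp only [dotProduct, sq]
    _ = ‖x‖ ^ 2 := by
        rw [dotProduct_mulVec_self, hkk, one_mulVec, EuclideanSpace.real_norm_sq_eq_dotProduct]

theorem Matrix.log_norm_mulVec_of_transpose_mul_eq {n : Type*} [Fintype n] [DecidableEq n]
    {g k : Matrix n n ℝ} {lam : n → ℝ} (hsvd : gᵀ * g = kᵀ * diagonal (fun i => lam i ^ 2) * k)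
    {s : ℝ} (hs : s ≠ 0) {v : n → ℝ} (hv : ∑ i, (k *ᵥ v) i ^ 2 = 1)
    (hpos : 0 < 1 - ∑ i, (1 - lam i ^ 2 / s ^ 2) * (k *ᵥ v) i ^ 2) :
    Real.log ‖(EuclideanSpace.equiv n ℝ).symm (g *ᵥ v)‖
      = Real.log s + 1 / 2 * Real.log (1 - ∑ i, (1 - lam i ^ 2 / s ^ 2) * (k *ᵥ v) i ^ 2) := by
  have hsq : ‖(EuclideanSpace.equiv n ℝ).symm (g *ᵥ v)‖ ^ 2
      = s ^ 2 * (1 - ∑ i, (1 - lam i ^ 2 / s ^ 2) * (k *ᵥ v) i ^ 2) := by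
    simp only [EuclideanSpace.real_norm_sq_eq_dotProduct, EuclideanSpace.equiv,
      PiLp.continuousLinearEquiv_symm_apply,
      dotProduct_mulVec_self_of_transpose_mul_eq hsvd, sub_mul, one_mul, sum_sub_distrib, hv,
      sub_sub_cancel, mul_sum]
    exact sum_congr rfl fun i _ => by field_simp
  calc _ = 1 / 2 * Real.log (‖(EuclideanSpace.equiv n ℝ).symm (g *ᵥ v)‖ ^ 2) := by
        rw [Real.log_pow]; ring
    _ = _ := by
        rw [hsq, Real.log_mul (by positivity) hpos.ne', Real.log_pow]
        push_cast
        ring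

section Integrals

variable {α : Type*} [MeasurableSpace α] {μ : Measure α} [IsFiniteMeasure μ]

theorem integrable_log_one_sub {u : α → ℝ} {M : ℝ} (hu : AEStronglyMeasurable u μ) (hM : M < 1)
    (huM : ∀ x, |u x| ≤ M) : Integrable (fun x => Real.log (1 - u x)) μ :=
  .of_bound (Real.measurable_log.comp_aemeasurable (hu.aemeasurable.const_sub 1)).aestronglyMeasurable
    (-Real.log (1 - M)) (.of_forall fun x => abs_log_one_sub_le hM (huM x))

theorem hasSum_integral_pow_div {u : α → ℝ} {M : ℝ} (hu : AEStronglyMeasurable u μ) (hM : M < 1)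
    (huM : ∀ x, |u x| ≤ M) :
    HasSum (fun r : ℕ => ∫ x, u x ^ (r + 1) / (r + 1) ∂μ) (-∫ x, Real.log (1 - u x) ∂μ) := by
  wlog hM0 : 0 ≤ M generalizing M
  · exact this (max_lt hM one_pos) (fun x => (huM x).trans (le_max_left _ _)) (le_max_right _ _)
  have hbound : ∀ (r : ℕ) x, ‖u x ^ (r + 1) / (r + 1)‖ ≤ M ^ (r + 1) := fun r x => by
    rw [norm_div, norm_pow, Real.norm_eq_abs]
    calc |u x| ^ (r + 1) / ‖(r : ℝ) + 1‖ ≤ |u x| ^ (r + 1) :=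
          div_le_self (by positivity) (by rw [Real.norm_of_nonneg (by positivity)]; linarith)
      _ ≤ M ^ (r + 1) := pow_le_pow_left₀ (abs_nonneg _) (huM x) _
  have hint : ∀ r : ℕ, Integrable (fun x => u x ^ (r + 1) / (r + 1)) μ := fun r =>
    .of_bound (by fun_prop) _ (.of_forall (hbound r))
  have hsummable : Summable fun r : ℕ => ∫ x, ‖u x ^ (r + 1) / (r + 1)‖ ∂μ := by
    refine .of_nonneg_of_le (fun r => integral_nonneg fun x => norm_nonneg _) (fun r => ?_)
      (((summable_geometric_of_lt_one hM0 hM).mul_left M).mul_right (μ.real Set.univ))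
    calc ∫ x, ‖u x ^ (r + 1) / (r + 1)‖ ∂μ ≤ ∫ _, M ^ (r + 1) ∂μ :=
          integral_mono (hint r).norm (integrable_const _) (hbound r)
      _ = M * M ^ r * μ.real Set.univ := by rw [integral_const, smul_eq_mul, pow_succ']; ring
  have hsum := hasSum_integral_of_summable_integral_norm hint hsummable
  rwa [integral_congr_ae (.of_forall fun x =>
    (Real.hasSum_pow_div_log_of_abs_lt_one ((huM x).trans_lt hM)).tsum_eq), integral_neg] at hsum

variable {d : ℕ} {Y : α → Fin d → ℝ}

theorem integral_sum_mul_sq_pow (hY : ∀ i, AEStronglyMeasurable (fun x => Y x i) μ)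
    (hY1 : ∀ x, ∑ i, Y x i ^ 2 = 1) (c : Fin d → ℝ) (n : ℕ) :
    ∫ x, (∑ i, c i * Y x i ^ 2) ^ n ∂μ = ∑ p ∈ Nat.antidiagonalTuple d n,
      ((Nat.multinomial univ p : ℝ) * ∫ x, ∏ i, Y x i ^ (2 * p i) ∂μ) * ∏ i, c i ^ p i := by
  have hint : ∀ p : Fin d → ℕ, Integrable (fun x => ∏ i, Y x i ^ (2 * p i)) μ := fun p => by
    refine .of_bound (by fun_prop) 1 (.of_forall fun x => ?_)
    rw [Real.norm_eq_abs, abs_prod]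
    refine prod_le_one (fun i _ => abs_nonneg _) fun i _ => ?_
    rw [pow_mul, abs_pow, abs_of_nonneg (sq_nonneg _)]
    exact pow_le_one₀ (sq_nonneg _)
      (hY1 x ▸ single_le_sum (fun j _ => sq_nonneg (Y x j)) (mem_univ i))
  simp_rw [sum_mul_sq_pow_eq]
  rw [integral_finsetSum _ fun p _ => ((hint p).const_mul _).const_mul _]
  refine sum_congr rfl fun p _ => ?_
  rw [integral_const_mul, integral_const_mul]
  ring

theorem hasSum_moment_series (hY : ∀ i, AEStronglyMeasurable (fun x => Y x i) μ)
    (hY1 : ∀ x, ∑ i, Y x i ^ 2 = 1) {c : Fin d → ℝ} (hc : ∀ i, |c i| < 1) :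
    HasSum (fun r : ℕ => 1 / (2 * ((r : ℝ) + 1)) * ∑ p ∈ Nat.antidiagonalTuple d (r + 1),
        ((Nat.multinomial univ p : ℝ) * ∫ x, ∏ i, Y x i ^ (2 * p i) ∂μ) * ∏ i, c i ^ p i)
      (-(1 / 2) * ∫ x, Real.log (1 - ∑ i, c i * Y x i ^ 2) ∂μ) := by
  obtain ⟨M, hM, huM⟩ := exists_lt_one_abs_sum_mul_sq_le hY1 hc
  have hsum := (hasSum_integral_pow_div (by fun_prop) hM huM).mul_left (1 / 2)
  rw [mul_neg, ← neg_mul] at hsum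
  refine hsum.congr_fun fun r => ?_
  rw [integral_div, ← integral_sum_mul_sq_pow hY hY1]
  field_simp

end Integrals

/-- **Theorem B.** Let `g ∈ SL(d,ℝ)` have singular values `0 < λ_1 ≤ ⋯ ≤ λ_d`, with
`gᵀg = kᵀ diag(λ_1²,…,λ_d²) k` for `k` orthogonal, and let `ν` be a Borel probability measure
on the sphere. If `λ_* > λ_d/√2` then
`∫ log‖gx‖ dν = log λ_* − Σ_{r≥1} (1/(2r)) Σ_{r_1+⋯+r_d=r} Θ_{r_1,…,r_d}(k,ν)
(1−λ_1²/λ_*²)^{r_1} ⋯ (1−λ_d²/λ_*²)^{r_d}`, where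
`Θ_{r_1,…,r_d}(k,ν) = (r!/(r_1!⋯r_d!)) ∫ (kx)_1^{2r_1}⋯(kx)_d^{2r_d} dν`,
with absolute convergence of the series. -/
theorem theoremB (d : ℕ) (hd : 1 ≤ d) (g k : Matrix (Fin d) (Fin d) ℝ)
    (lam : Fin d → ℝ) (hpos : ∀ i, 0 < lam i) (hmono : Monotone lam)
    (hk : k ∈ Matrix.orthogonalGroup (Fin d) ℝ)
    (hsvd : g.transpose * g = k.transpose * Matrix.diagonal (fun i => lam i ^ 2) * k)
    (ν : Measure (Metric.sphere (0 : EuclideanSpace ℝ (Fin d)) 1)) [IsProbabilityMeasure ν]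
    (lstar : ℝ) (hstar : lam ⟨d - 1, by omega⟩ / Real.sqrt 2 < lstar) :
    Summable (fun r : ℕ => (1 / (2 * ((r : ℝ) + 1))) *
        ∑ p ∈ Finset.Nat.antidiagonalTuple d (r + 1),
          ((Nat.multinomial Finset.univ p : ℝ) *
            ∫ x : Metric.sphere (0 : EuclideanSpace ℝ (Fin d)) 1,
              ∏ i, (k.mulVec (x : EuclideanSpace ℝ (Fin d))) i ^ (2 * p i) ∂ν) *
            ∏ i, |1 - lam i ^ 2 / lstar ^ 2| ^ p i) ∧
    (∫ x : Metric.sphere (0 : EuclideanSpace ℝ (Fin d)) 1,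
        Real.log ‖(EuclideanSpace.equiv (Fin d) ℝ).symm
          (g.mulVec (x : EuclideanSpace ℝ (Fin d)))‖ ∂ν)
      = Real.log lstar - ∑' r : ℕ, (1 / (2 * ((r : ℝ) + 1))) *
          ∑ p ∈ Finset.Nat.antidiagonalTuple d (r + 1),
            ((Nat.multinomial Finset.univ p : ℝ) *
              ∫ x : Metric.sphere (0 : EuclideanSpace ℝ (Fin d)) 1,
                ∏ i, (k.mulVec (x : EuclideanSpace ℝ (Fin d))) i ^ (2 * p i) ∂ν) *
              ∏ i, (1 - lam i ^ 2 / lstar ^ 2) ^ p i := by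
  have hlam : ∀ i, lam i < √2 * lstar := fun i =>
    (hmono (Fin.le_def.2 (Nat.le_sub_one_of_lt i.isLt))).trans_lt
      (by rwa [div_lt_iff₀' (by positivity)] at hstar)
  have hlstar : lstar ≠ 0 :=
    (pos_of_mul_pos_right ((hpos ⟨0, hd⟩).trans (hlam _)) (Real.sqrt_nonneg 2)).ne'
  have ha : ∀ i, |1 - lam i ^ 2 / lstar ^ 2| < 1 := fun i =>
    abs_one_sub_sq_div_sq_lt_one (hpos i) (hlam i)
  have hY1 : ∀ x : Metric.sphere (0 : EuclideanSpace ℝ (Fin d)) 1,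
      ∑ i, (k *ᵥ (x : EuclideanSpace ℝ (Fin d))) i ^ 2 = 1 := fun x => by
    simp [sum_sq_mulVec_of_mem_orthogonalGroup hk]
  obtain ⟨M, hM, huM⟩ := exists_lt_one_abs_sum_mul_sq_le hY1 ha
  have hlog := fun x => log_norm_mulVec_of_transpose_mul_eq hsvd hlstar (hY1 x)
    (by linarith [(abs_le.1 (huM x)).2])
  refine ⟨(hasSum_moment_series (fun i => by fun_prop) hY1
    (c := fun i => |1 - lam i ^ 2 / lstar ^ 2|) (by simpa using ha)).summable, ?_⟩
  rw [(hasSum_moment_series (fun i => by fun_prop) hY1 ha).tsum_eq,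
    integral_congr_ae (.of_forall hlog),
    integral_add (integrable_const _) ((integrable_log_one_sub (by fun_prop) hM huM).const_mul _),
    integral_const_mul, integral_const, probReal_univ, one_smul]
  ring
end
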